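/- Let k and n be positive integers with k ≤ n, let x and y be binary strings of length n, and suppose there exist integers 0 ≤ i < j ≤ k such that the cyclic shift of x by i positions equals the cyclic shift of y by j positions, i.e., (x_{i+1}, …, x_n, x_1, …, x_i) = (y_{j+1}, …, y_n, y_1, …, y_j). Then x and y are k-confusable. -/
import Mathlib


/-- `Subseq k x` is the set of all subsequences of `x` obtained by deleting exactly `k` symbols,
i.e. all subsequences of `x` of length `|x| - k`. -/
def Subseq {α : Type*} (k : ℕ) (x : List α) : Set (List α) :=
  {y | y.Sublist x ∧ y.length + k = x.length}

/-- Two strings are `k`-confusable if they have a common output on the `k`-deletion channel. -/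
def Confusable {α : Type*} (k : ℕ) (x y : List α) : Prop :=
  (Subseq k x ∩ Subseq k y).Nonempty

theorem stmt_18 (k n : ℕ) (hk : 0 < k) (hkn : k ≤ n)
    (x y : List Bool) (hx : x.length = n) (hy : y.length = n)
    (i j : ℕ) (hij : i < j) (hjk : j ≤ k)
    (hshift : x.rotate i = y.rotate j) :
    Confusable k x y := by
  have hin : i ≤ n := le_trans (le_of_lt hij) (le_trans hjk hkn)
  have hjn : j ≤ n := le_trans hjk hkn
  have hrot : x.drop i ++ x.take i = y.drop j ++ y.take j := by
    rw [← List.rotate_eq_drop_append_take (by omega : i ≤ x.length),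
        ← List.rotate_eq_drop_append_take (by omega : j ≤ y.length), hshift]
  have hpref : (y.drop j) <+: (x.drop i) := by
    apply List.prefix_of_prefix_length_le
      (l₃ := x.drop i ++ x.take i)
    · rw [hrot]; exact List.prefix_append _ _
    · exact List.prefix_append _ _
    · simp [hx, hy]; omega
  refine ⟨(y.drop j).take (n - k), ⟨?_, ?_⟩, ?_, ?_⟩
  · exact ((List.take_sublist _ _).trans hpref.sublist).trans (List.drop_sublist _ _)
  · simp [hx, hy]; omega
  · exact (List.take_sublist _ _).trans (List.drop_sublist _ _)
  · simp [hy]; omega
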